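/- arXiv:2310.12394 — 6 statements merged into one kernel-verified Lean document; each statement's English description precedes it below -/
import Mathlib

section
/- Let p_1 ≤ ... ≤ p_m and q_1 ≤ ... ≤ q_m be real numbers, and let D(P,Q) = ∑_{k=1}^m |p_k − q_k|. For indices g ≤ h, let P' be P with p_g removed and Q' be Q with q_h removed, and let D(P',Q') = ∑ |p'_k − q'_k| for the sorted remaining points matched in order. Then D(P',Q') − D(P,Q) ≤ (p_h − p_g) − |p_h − q_h|. -/
private lemma tel_sum (p : ℕ → ℝ) (g h : ℕ) (hgh : g ≤ h) :
    ∑ k ∈ Finset.Ico g h, (p (k + 1) - p k) = p h - p g := by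
  induction h, hgh using Nat.le_induction with
  | base => simp
  | succ n hn ih => rw [Finset.sum_Ico_succ_top hn, ih]; ring

/-- Removing `p g` from `P` and `q h` from `Q` (with `g ≤ h`) changes the
in-order matching cost by at most `(p h - p g) - |p h - q h|`. -/
theorem remove_point_cost_le_left (m g h : ℕ) (p q : ℕ → ℝ)
    (hg : 1 ≤ g) (hgh : g ≤ h) (hm : h ≤ m)
    (hp : ∀ k, 1 ≤ k → k < m → p k ≤ p (k + 1))
    (hq : ∀ k, 1 ≤ k → k < m → q k ≤ q (k + 1)) :
    (∑ k ∈ Finset.Icc 1 (g - 1), |p k - q k|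
      + ∑ k ∈ Finset.Icc g (h - 1), |p (k + 1) - q k|
      + ∑ k ∈ Finset.Icc (h + 1) m, |p k - q k|)
    - ∑ k ∈ Finset.Icc 1 m, |p k - q k|
    ≤ (p h - p g) - |p h - q h| := by
  have hIcc1 : Finset.Icc 1 (g - 1) = Finset.Ico 1 g := by
    rw [← Finset.Ico_add_one_right_eq_Icc]; congr 1; omega
  have hIcc2 : Finset.Icc g (h - 1) = Finset.Ico g h := by
    rw [← Finset.Ico_add_one_right_eq_Icc]; congr 1; omega
  have hIcc3 : Finset.Icc (h + 1) m = Finset.Ico (h + 1) (m + 1) := by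
    rw [Finset.Ico_add_one_right_eq_Icc]
  have hIcc4 : Finset.Icc 1 m = Finset.Ico 1 (m + 1) := by
    rw [Finset.Ico_add_one_right_eq_Icc]
  rw [hIcc1, hIcc2, hIcc3, hIcc4]
  have hsplit : ∑ k ∈ Finset.Ico 1 (m + 1), |p k - q k|
      = ∑ k ∈ Finset.Ico 1 g, |p k - q k| + ∑ k ∈ Finset.Ico g (h + 1), |p k - q k|
        + ∑ k ∈ Finset.Ico (h + 1) (m + 1), |p k - q k| := by
    rw [Finset.sum_Ico_consecutive _ hg (Nat.le_succ_of_le hgh),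
      Finset.sum_Ico_consecutive _ (le_trans hg (Nat.le_succ_of_le hgh))
        (Nat.succ_le_succ hm)]
  have hlast : ∑ k ∈ Finset.Ico g (h + 1), |p k - q k|
      = ∑ k ∈ Finset.Ico g h, |p k - q k| + |p h - q h| := by
    rw [Finset.sum_Ico_succ_top hgh]
  rw [hsplit, hlast]
  have key : ∑ k ∈ Finset.Ico g h, |p (k + 1) - q k|
      ≤ ∑ k ∈ Finset.Ico g h, (|p k - q k| + (p (k + 1) - p k)) := by
    apply Finset.sum_le_sum
    intro k hk
    rw [Finset.mem_Ico] at hk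
    have hpk : p k ≤ p (k + 1) := hp k (le_trans hg hk.1) (lt_of_lt_of_le hk.2 hm)
    calc |p (k + 1) - q k| ≤ |p (k + 1) - p k| + |p k - q k| := abs_sub_le _ _ _
      _ = |p k - q k| + (p (k + 1) - p k) := by
          rw [abs_of_nonneg (by linarith)]; ring
  rw [Finset.sum_add_distrib, tel_sum p g h hgh] at key
  linarith
end

section
/- Let p_1 ≤ ... ≤ p_m and q_1 ≤ ... ≤ q_m be real numbers, and let D(P,Q) = ∑_{k=1}^m |p_k − q_k|. For indices g > h, let D(P',Q') be the in-order matching cost after removing p_g and q_h. Then D(P',Q') − D(P,Q) ≤ (q_g − q_h) − |q_g − p_g|. -/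
lemma tele_sum (q : ℕ → ℝ) (a b : ℕ) (hab : a ≤ b) :
    ∑ k ∈ Finset.Ico a b, (q (k + 1) - q k) = q b - q a := by
  induction b, hab using Nat.le_induction with
  | base => simp
  | succ n hn ih => rw [Finset.sum_Ico_succ_top hn, ih]; ring

/-- Removing `p g` from `P` and `q h` from `Q` (with `g > h`) changes the
in-order matching cost by at most `(q g - q h) - |q g - p g|`. -/
theorem remove_point_cost_le_right (m g h : ℕ) (p q : ℕ → ℝ)
    (hh : 1 ≤ h) (hgh : h < g) (hm : g ≤ m)
    (hp : ∀ k, 1 ≤ k → k < m → p k ≤ p (k + 1))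
    (hq : ∀ k, 1 ≤ k → k < m → q k ≤ q (k + 1)) :
    (∑ k ∈ Finset.Icc 1 (h - 1), |p k - q k|
      + ∑ k ∈ Finset.Icc h (g - 1), |p k - q (k + 1)|
      + ∑ k ∈ Finset.Icc (g + 1) m, |p k - q k|)
    - ∑ k ∈ Finset.Icc 1 m, |p k - q k|
    ≤ (q g - q h) - |q g - p g| := by
  have e1 : Finset.Icc 1 (h - 1) = Finset.Ico 1 h := by ext x; simp; omega
  have e2 : Finset.Icc h (g - 1) = Finset.Ico h g := by ext x; simp; omega
  have e3 : Finset.Icc (g + 1) m = Finset.Ico (g + 1) (m + 1) := by ext x; simp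
  have e4 : Finset.Icc 1 m = Finset.Ico 1 (m + 1) := by ext x; simp
  rw [e1, e2, e3, e4]
  have split : ∑ k ∈ Finset.Ico 1 (m + 1), |p k - q k|
      = ∑ k ∈ Finset.Ico 1 h, |p k - q k| + ∑ k ∈ Finset.Ico h g, |p k - q k|
        + |p g - q g| + ∑ k ∈ Finset.Ico (g + 1) (m + 1), |p k - q k| := by
    rw [← Finset.sum_Ico_consecutive (fun k => |p k - q k|) (by omega : 1 ≤ g + 1)
        (by omega : g + 1 ≤ m + 1),
      ← Finset.sum_Ico_consecutive (fun k => |p k - q k|) (by omega : 1 ≤ h)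
        (by omega : h ≤ g + 1),
      ← Finset.sum_Ico_consecutive (fun k => |p k - q k|) (by omega : h ≤ g)
        (by omega : g ≤ g + 1)]
    simp [add_assoc]
  rw [split]
  have key : ∑ k ∈ Finset.Ico h g, |p k - q (k + 1)|
      ≤ ∑ k ∈ Finset.Ico h g, |p k - q k| + (q g - q h) := by
    have := tele_sum q h g (le_of_lt hgh)
    calc ∑ k ∈ Finset.Ico h g, |p k - q (k + 1)|
        ≤ ∑ k ∈ Finset.Ico h g, (|p k - q k| + (q (k + 1) - q k)) := by
          apply Finset.sum_le_sum
          intro k hk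
          simp only [Finset.mem_Ico] at hk
          have hqk : q k ≤ q (k + 1) := hq k (by omega) (by omega)
          have : |p k - q (k + 1)| ≤ |p k - q k| + |q k - q (k + 1)| := abs_sub_le _ _ _
          have h2 : |q k - q (k + 1)| = q (k + 1) - q k := by
            rw [abs_sub_comm]; exact abs_of_nonneg (by linarith)
          linarith
      _ = ∑ k ∈ Finset.Ico h g, |p k - q k| + (q g - q h) := by
          rw [Finset.sum_add_distrib, this]
  have habs : |p g - q g| = |q g - p g| := abs_sub_comm _ _
  linarith
end

section
/- Define N(α, γ) = α(1−γ) + (1−α)γ. If 1/2 ≤ α ≤ β ≤ 1 and 1/2 ≤ γ ≤ 1, then N(α, γ) ≤ 2·max(1−α, N(β, γ)). -/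
/-- If `1/2 ≤ α ≤ β ≤ 1` and `1/2 ≤ γ ≤ 1` then `N(α,γ) ≤ 2·max(1-α, N(β,γ))`. -/
theorem N_le_two_max' (α β γ : ℝ)
    (hα : 1 / 2 ≤ α) (hαβ : α ≤ β) (hβ : β ≤ 1)
    (hγ : 1 / 2 ≤ γ) (hγ1 : γ ≤ 1) :
    α * (1 - γ) + (1 - α) * γ ≤ 2 * max (1 - α) (β * (1 - γ) + (1 - β) * γ) := by
  have h1 := le_max_left (1 - α) (β * (1 - γ) + (1 - β) * γ)
  have h2 := le_max_right (1 - α) (β * (1 - γ) + (1 - β) * γ)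
  nlinarith [mul_nonneg (sub_nonneg.2 hαβ) (by linarith : (0:ℝ) ≤ 2*γ - 1),
    mul_nonneg (sub_nonneg.2 hαβ) (by linarith : (0:ℝ) ≤ 1 - γ)]
end

section
/- Let C > 0 and let Z_0 < Z_1 < ... < Z_m be positive reals satisfying ∑_{j=0}^{i} Z_j ≤ (1/9)·Z_{i+1} for all i < m. Suppose nonnegative sequences (w_i), (e_i) satisfy w_0 = 0, e_0 = 0, and for all i ∈ [0, m−1]: e_{i+1} ≤ 2(C·Z_{i+1} + ∑_{j=0}^{i} e_j + ∑_{j=0}^{i} w_j) and w_{i+1} ≤ C·Z_{i+1} + ∑_{j=0}^{i+1} e_j + ∑_{j=0}^{i} w_j. Then w_i ≤ 8C·Z_i and e_i ≤ 5C·Z_i for all i ∈ [0, m]. -/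
/-- The guess-and-double cost recursion: if the phase costs `w` and trigger
costs `e` satisfy the recursive bounds, then `w i ≤ 8·C·Z i` and
`e i ≤ 5·C·Z i` for all `i ≤ m`. -/
theorem guess_and_double_recursion (m : ℕ) (C : ℝ) (Z w e : ℕ → ℝ)
    (hC : 0 < C)
    (hZpos : ∀ i ≤ m, 0 < Z i)
    (hZmono : ∀ i < m, Z i < Z (i + 1))
    (hZsum : ∀ i < m, ∑ j ∈ Finset.range (i + 1), Z j ≤ (1 / 9) * Z (i + 1))
    (hw0 : w 0 = 0) (he0 : e 0 = 0)
    (hwpos : ∀ i ≤ m, 0 ≤ w i) (hepos : ∀ i ≤ m, 0 ≤ e i)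
    (he : ∀ i < m, e (i + 1)
      ≤ 2 * (C * Z (i + 1) + ∑ j ∈ Finset.range (i + 1), e j
        + ∑ j ∈ Finset.range (i + 1), w j))
    (hw : ∀ i < m, w (i + 1)
      ≤ C * Z (i + 1) + ∑ j ∈ Finset.range (i + 2), e j
        + ∑ j ∈ Finset.range (i + 1), w j) :
    ∀ i ≤ m, w i ≤ 8 * C * Z i ∧ e i ≤ 5 * C * Z i := by

  suffices H : ∀ i, i ≤ m → ∀ j ≤ i, w j ≤ 8 * C * Z j ∧ e j ≤ 5 * C * Z j by
    intro i hi; exact H i hi i le_rfl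
  intro i
  induction i with
  | zero =>
    intro _ j hj
    interval_cases j
    have h0 := hZpos 0 (Nat.zero_le m)
    constructor
    · rw [hw0]; positivity
    · rw [he0]; positivity
  | succ n ih =>
    intro hn j hj
    rcases Nat.lt_or_ge j (n + 1) with h | h
    · exact ih (Nat.le_of_succ_le hn) j (Nat.lt_succ_iff.mp h)
    · have hj' : j = n + 1 := le_antisymm hj h
      subst hj'
      have hnm : n < m := hn
      have IH := ih (le_of_lt hnm)
      have hZn1 : 0 < Z (n + 1) := hZpos (n + 1) hn
      have hZs := hZsum n hnm
      have hse : ∑ j ∈ Finset.range (n + 1), e j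
          ≤ 5 * C * ((1 / 9) * Z (n + 1)) := by
        calc ∑ j ∈ Finset.range (n + 1), e j
            ≤ ∑ j ∈ Finset.range (n + 1), 5 * C * Z j := by
              apply Finset.sum_le_sum
              intro k hk
              exact (IH k (Nat.lt_succ_iff.mp (Finset.mem_range.mp hk))).2
          _ = 5 * C * ∑ j ∈ Finset.range (n + 1), Z j := by
              rw [Finset.mul_sum]
          _ ≤ 5 * C * ((1 / 9) * Z (n + 1)) := by
              apply mul_le_mul_of_nonneg_left hZs; positivity
      have hsw : ∑ j ∈ Finset.range (n + 1), w j
          ≤ 8 * C * ((1 / 9) * Z (n + 1)) := by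
        calc ∑ j ∈ Finset.range (n + 1), w j
            ≤ ∑ j ∈ Finset.range (n + 1), 8 * C * Z j := by
              apply Finset.sum_le_sum
              intro k hk
              exact (IH k (Nat.lt_succ_iff.mp (Finset.mem_range.mp hk))).1
          _ = 8 * C * ∑ j ∈ Finset.range (n + 1), Z j := by
              rw [Finset.mul_sum]
          _ ≤ 8 * C * ((1 / 9) * Z (n + 1)) := by
              apply mul_le_mul_of_nonneg_left hZs; positivity
      have heb : e (n + 1) ≤ 5 * C * Z (n + 1) := by
        have := he n hnm
        nlinarith [mul_pos hC hZn1]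
      refine ⟨?_, heb⟩
      have := hw n hnm
      rw [Finset.sum_range_succ] at this
      nlinarith [mul_pos hC hZn1]
end

section
/- For any neighbor algorithm, if for all adjacent available server pairs (s, s') the probability p(x) that a request at x is assigned to s' (with probability 1−p(x) of assignment to s) is nondecreasing in the request location x across (s, s'), then for all u, v, s' with v ∈ [u, s'], the probability that a request at u is assigned to the available server s' is at most the probability that a request at v is assigned to s'. -/
/-- A neighbor algorithm (given by assignment probabilities `P x s` of a request
at `x` to available server `s ∈ S`) that is monotone on every interval between
adjacent available servers is monotone: for `u ≤ v ≤ s'` with `s'` available,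
the probability of assigning a request at `u` to `s'` is at most that at `v`. -/
theorem neighbor_monotone (S : Finset ℝ) (hS : S.Nonempty)
    (P : ℝ → ℝ → ℝ)
    (hP01 : ∀ x s, 0 ≤ P x s ∧ P x s ≤ 1)
    (hsum : ∀ x, ∑ s ∈ S, P x s = 1)
    (hself : ∀ s ∈ S, P s s = 1)
    (hneighbor : ∀ x : ℝ, ∀ s ∈ S,
      (∃ s'' ∈ S, (x < s'' ∧ s'' < s) ∨ (s < s'' ∧ s'' < x)) → P x s = 0)
    (hleft : ∀ x : ℝ, ∀ s ∈ S, (∀ t ∈ S, x < t) → (∀ t ∈ S, s ≤ t) → P x s = 1)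
    (hright : ∀ x : ℝ, ∀ s ∈ S, (∀ t ∈ S, t < x) → (∀ t ∈ S, t ≤ s) → P x s = 1)
    (hmono : ∀ s ∈ S, ∀ s' ∈ S, s < s' → (∀ t ∈ S, ¬(s < t ∧ t < s')) →
      ∀ u v : ℝ, s < u → u ≤ v → v < s' → P u s' ≤ P v s') :
    ∀ u v s' : ℝ, s' ∈ S → u ≤ v → v ≤ s' → P u s' ≤ P v s' := by
  have hzero : ∀ x ∈ S, ∀ s ∈ S, x ≠ s → P x s = 0 := by
    intro x hx s hs hne
    have h1 := hsum x
    rw [← Finset.add_sum_erase S _ hx, hself x hx] at h1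
    have key : ∑ t ∈ S.erase x, P x t = 0 := by linarith
    have := (Finset.sum_eq_zero_iff_of_nonneg (fun t _ => (hP01 x t).1)).mp key
    exact this s (Finset.mem_erase.mpr ⟨hne.symm, hs⟩)
  intro u v s' hs' huv hvs'
  rcases eq_or_lt_of_le hvs' with hveq | hvlt
  · rw [hveq, hself s' hs']
    exact (hP01 u s').2
  · by_cases hA : ∃ t ∈ S, u < t ∧ t < s'
    · obtain ⟨t, ht, h1, h2⟩ := hA
      rw [hneighbor u s' hs' ⟨t, ht, Or.inl ⟨h1, h2⟩⟩]
      exact (hP01 v s').1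
    · push_neg at hA
      by_cases hB : ∃ s ∈ S, s ≤ u
      · set T := S.filter (· ≤ u) with hT
        have hTne : T.Nonempty := by
          obtain ⟨s, hs, hsu⟩ := hB
          exact ⟨s, Finset.mem_filter.mpr ⟨hs, hsu⟩⟩
        set s := T.max' hTne with hsdef
        have hsS : s ∈ S := (Finset.mem_filter.mp (T.max'_mem hTne)).1
        have hsu : s ≤ u := (Finset.mem_filter.mp (T.max'_mem hTne)).2
        rcases eq_or_lt_of_le hsu with heq | hlt
        · have hne : u ≠ s' := by
            intro h; rw [h] at huv; linarith
          rw [hzero u (heq ▸ hsS) s' hs' hne]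
          exact (hP01 v s').1
        · have hadj : ∀ t ∈ S, ¬(s < t ∧ t < s') := by
            rintro t ht ⟨h1, h2⟩
            by_cases htu : t ≤ u
            · exact absurd (Finset.le_max' T t (Finset.mem_filter.mpr ⟨ht, htu⟩))
                (not_le.mpr h1)
            · exact absurd (hA t ht (lt_of_not_ge htu)) (not_le.mpr h2)
          exact hmono s hsS s' hs' (by linarith) hadj u v hlt huv hvlt
      · push_neg at hB
        have hge : ∀ t ∈ S, s' ≤ t := fun t ht => hA t ht (hB t ht)
        rw [hleft u s' hs' hB hge,
          hleft v s' hs' (fun t ht => lt_of_lt_of_le hvlt (hge t ht)) hge]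
end

section
/- For α, γ ∈ [0,1] with N(α, γ) = α(1−γ) + (1−α)γ: N(α, γ) ≤ 2·max(N(β_ℓ, p_ℓ), N(β_r, p_r), min(α, 1−α)) holds in each of the following four cases: (a) p_r < 1/2 and α ≤ β_r, taking γ = p_r; (b) p_ℓ > 1/2 and α ≥ β_ℓ, taking γ = p_ℓ; (c) p_r ≥ 1/2, p_ℓ ≤ 1/2, β_ℓ ≤ α ≤ 1/2, taking γ = p_ℓ; (d) p_r ≥ 1/2, p_ℓ ≤ 1/2, β_r ≥ α ≥ 1/2, taking γ = p_r. Here β_ℓ, β_r, p_ℓ, p_r ∈ [0,1]. -/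
/-- The four trigger-request cases: in each case the normalized cost
`N(α,γ) = α(1-γ)+(1-α)γ` is bounded by `2·max(N(βℓ,pℓ), N(βr,pr), min(α,1-α))`. -/
theorem trigger_cases (α βl βr pl pr : ℝ)
    (hα : α ∈ Set.Icc (0:ℝ) 1) (hβl : βl ∈ Set.Icc (0:ℝ) 1)
    (hβr : βr ∈ Set.Icc (0:ℝ) 1) (hpl : pl ∈ Set.Icc (0:ℝ) 1)
    (hpr : pr ∈ Set.Icc (0:ℝ) 1) :
    (pr < 1 / 2 → α ≤ βr →
      α * (1 - pr) + (1 - α) * pr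
        ≤ 2 * max (max (βl * (1 - pl) + (1 - βl) * pl)
            (βr * (1 - pr) + (1 - βr) * pr)) (min α (1 - α)))
    ∧ (pl > 1 / 2 → α ≥ βl →
      α * (1 - pl) + (1 - α) * pl
        ≤ 2 * max (max (βl * (1 - pl) + (1 - βl) * pl)
            (βr * (1 - pr) + (1 - βr) * pr)) (min α (1 - α)))
    ∧ (pr ≥ 1 / 2 → pl ≤ 1 / 2 → βl ≤ α → α ≤ 1 / 2 →
      α * (1 - pl) + (1 - α) * pl
        ≤ 2 * max (max (βl * (1 - pl) + (1 - βl) * pl)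
            (βr * (1 - pr) + (1 - βr) * pr)) (min α (1 - α)))
    ∧ (pr ≥ 1 / 2 → pl ≤ 1 / 2 → βr ≥ α → α ≥ 1 / 2 →
      α * (1 - pr) + (1 - α) * pr
        ≤ 2 * max (max (βl * (1 - pl) + (1 - βl) * pl)
            (βr * (1 - pr) + (1 - βr) * pr)) (min α (1 - α))) := by
  obtain ⟨hα0, hα1⟩ := hα
  obtain ⟨hβl0, hβl1⟩ := hβl
  obtain ⟨hβr0, hβr1⟩ := hβr
  obtain ⟨hpl0, hpl1⟩ := hpl
  obtain ⟨hpr0, hpr1⟩ := hpr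
  set A := βl * (1 - pl) + (1 - βl) * pl with hAdef
  set B := βr * (1 - pr) + (1 - βr) * pr with hBdef
  set M := max (max A B) (min α (1 - α)) with hMdef
  have hA : A ≤ M := le_trans (le_max_left A B) (le_max_left _ _)
  have hB : B ≤ M := le_trans (le_max_right A B) (le_max_left _ _)
  have hm : min α (1 - α) ≤ M := le_max_right _ _
  have hA0 : 0 ≤ A := by nlinarith
  have hM0 : 0 ≤ M := le_trans hA0 hA
  refine ⟨fun h1 h2 => ?_, fun h1 h2 => ?_, fun h1 h2 h3 h4 => ?_,
    fun h1 h2 h3 h4 => ?_⟩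
  · nlinarith [hB, hM0]
  · nlinarith [hA, hM0]
  · have hmin : min α (1 - α) = α := min_eq_left (by linarith)
    rw [hmin] at hm
    nlinarith [hA, hm]
  · have hmin : min α (1 - α) = 1 - α := min_eq_right (by linarith)
    rw [hmin] at hm
    nlinarith [hB, hm]
end
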